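/- A dagger category C is finitely based dagger complete if and only if C has dagger equalizers, dagger intersections, and finite dagger products. -/

import Mathlib

open CategoryTheory

universe v u v₁ u₁ v₂ u₂

class DaggerCategory (C : Type u) [Category.{v} C] where
  dag : ∀ {A B : C}, (A ⟶ B) → (B ⟶ A)
  dag_id : ∀ (A : C), dag (𝟙 A) = 𝟙 A
  dag_comp : ∀ {A B X : C} (f : A ⟶ B) (g : B ⟶ X), dag (f ≫ g) = dag g ≫ dag f
  dag_dag : ∀ {A B : C} (f : A ⟶ B), dag (dag f) = f

postfix:max "†" => DaggerCategory.dag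

section Defs

variable {C : Type u} [Category.{v} C] [DaggerCategory C]

/-- A morphism `f` is a partial isometry if `f ∘ f† ∘ f = f`. -/
def IsPartialIsometry {A B : C} (f : A ⟶ B) : Prop :=
  f ≫ f† ≫ f = f

/-- A morphism `f : A ⟶ B` is unitary if `f† ∘ f = 𝟙 A` and `f ∘ f† = 𝟙 B`. -/
def IsUnitary {A B : C} (f : A ⟶ B) : Prop :=
  f ≫ f† = 𝟙 A ∧ f† ≫ f = 𝟙 B

/-- A morphism `f` is dagger monic (an isometry) if `f† ∘ f = 𝟙`. -/
def DaggerMonic {A B : C} (f : A ⟶ B) : Prop :=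
  f ≫ f† = 𝟙 A

/-- `(L, l)` is a limit cone over the diagram `D`. -/
def IsLimitCone {J : Type u₁} [Category.{v₁} J] (D : J ⥤ C) (L : C)
    (l : ∀ j : J, L ⟶ D.obj j) : Prop :=
  (∀ {j j' : J} (f : j ⟶ j'), l j ≫ D.map f = l j') ∧
  (∀ (M : C) (m : ∀ j : J, M ⟶ D.obj j),
    (∀ {j j' : J} (f : j ⟶ j'), m j ≫ D.map f = m j') →
    ∃! g : M ⟶ L, ∀ j : J, g ≫ l j = m j)

/-- A class of objects `Ω` is weakly initial when every object admits a morphism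
from some member of `Ω`. -/
def WeaklyInitial {J : Type u₁} [Category.{v₁} J] (Ω : Set J) : Prop :=
  ∀ B : J, ∃ A ∈ Ω, Nonempty (A ⟶ B)

/-- `(L, l)` is a dagger limit of `(D, Ω)`: a limit cone whose legs at `Ω` are
partial isometries with pairwise commuting induced projections. -/
def IsDaggerLimit {J : Type u₁} [Category.{v₁} J] (D : J ⥤ C) (Ω : Set J) (L : C)
    (l : ∀ j : J, L ⟶ D.obj j) : Prop :=
  IsLimitCone D L l ∧
  (∀ j ∈ Ω, IsPartialIsometry (l j)) ∧
  (∀ j ∈ Ω, ∀ j' ∈ Ω,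
    (l j ≫ (l j)†) ≫ (l j' ≫ (l j')†) = (l j' ≫ (l j')†) ≫ (l j ≫ (l j)†))

end Defs

section MoreDefs

variable {C : Type u} [Category.{v} C] [DaggerCategory C]

/-- `e : E ⟶ A` is an equalizer of the parallel pair `f, g : A ⟶ B`. -/
def IsEqualizer {E A B : C} (e : E ⟶ A) (f g : A ⟶ B) : Prop :=
  e ≫ f = e ≫ g ∧
  ∀ {X : C} (h : X ⟶ A), h ≫ f = h ≫ g → ∃! k : X ⟶ E, k ≫ e = h

/-- `C` has dagger equalizers: every parallel pair has an equalizer that is dagger monic. -/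
def HasDaggerEqualizers (C : Type u) [Category.{v} C] [DaggerCategory C] : Prop :=
  ∀ {A B : C} (f g : A ⟶ B), ∃ (E : C) (e : E ⟶ A), IsEqualizer e f g ∧ DaggerMonic e

/-- `(P, p, q)` is a dagger pullback of the cospan `f : A ⟶ X`, `g : B ⟶ X`: a pullback whose
legs to the feet are partial isometries with commuting induced projections. -/
def IsDaggerPullback {P A B X : C} (p : P ⟶ A) (q : P ⟶ B) (f : A ⟶ X) (g : B ⟶ X) : Prop :=
  p ≫ f = q ≫ g ∧
  (∀ {Y : C} (a : Y ⟶ A) (b : Y ⟶ B), a ≫ f = b ≫ g →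
    ∃! k : Y ⟶ P, k ≫ p = a ∧ k ≫ q = b) ∧
  IsPartialIsometry p ∧ IsPartialIsometry q ∧
  (p ≫ p†) ≫ (q ≫ q†) = (q ≫ q†) ≫ (p ≫ p†)

/-- `C` has dagger pullbacks. -/
def HasDaggerPullbacks (C : Type u) [Category.{v} C] [DaggerCategory C] : Prop :=
  ∀ {A B X : C} (f : A ⟶ X) (g : B ⟶ X),
    ∃ (P : C) (p : P ⟶ A) (q : P ⟶ B), IsDaggerPullback p q f g

/-- `(P, p)` is a dagger product of the family `A`: a product whose projections are partial
isometries with pairwise commuting induced projections. -/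
def IsDaggerProduct {ι : Type u₁} (A : ι → C) (P : C) (p : ∀ i, P ⟶ A i) : Prop :=
  (∀ {Y : C} (a : ∀ i, Y ⟶ A i), ∃! k : Y ⟶ P, ∀ i, k ≫ p i = a i) ∧
  (∀ i, IsPartialIsometry (p i)) ∧
  (∀ i i', (p i ≫ (p i)†) ≫ (p i' ≫ (p i')†) = (p i' ≫ (p i')†) ≫ (p i ≫ (p i)†))

end MoreDefs

/-- A class `Ω` of objects of `J` is a basis when every object `B` admits a unique `A ∈ Ω`
with `J(A, B)` nonempty. -/
def IsBasis {J : Type u₁} [Category.{v₁} J] (Ω : Set J) : Prop :=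
  ∀ B : J, ∃! A : J, A ∈ Ω ∧ Nonempty (A ⟶ B)

/-- `C` is finitely based dagger complete: every diagram over a small category with a finite
basis `Ω` has a dagger limit relative to `Ω`. -/
def FinitelyBasedDaggerComplete (C : Type u) [Category.{v} C] [DaggerCategory C] : Prop :=
  ∀ (J : Type v) [SmallCategory J] (Ω : Set J), Ω.Finite → IsBasis Ω →
    ∀ D : J ⥤ C, ∃ (L : C) (l : ∀ j : J, L ⟶ D.obj j), IsDaggerLimit D Ω L l

section
variable {C : Type u} [Category.{v} C] [DaggerCategory C]

/-- `(P, p, b)` is a wide pullback of the family `m i : A i ⟶ B`. -/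
def IsWidePullback {ι : Type v} {B : C} {A : ι → C} (m : ∀ i, A i ⟶ B)
    (P : C) (p : ∀ i, P ⟶ A i) (b : P ⟶ B) : Prop :=
  (∀ i, p i ≫ m i = b) ∧
  ∀ {Y : C} (q : ∀ i, Y ⟶ A i) (c : Y ⟶ B), (∀ i, q i ≫ m i = c) →
    ∃! k : Y ⟶ P, (∀ i, k ≫ p i = q i) ∧ k ≫ b = c

end

/-- `C` has dagger intersections: every family of dagger monomorphisms into `B` has a wide
pullback all of whose legs to the `A i` are dagger monic. -/
def HasDaggerIntersections (C : Type u) [Category.{v} C] [DaggerCategory C] : Prop :=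
  ∀ (ι : Type v) (B : C) (A : ι → C) (m : ∀ i, A i ⟶ B), (∀ i, DaggerMonic (m i)) →
    ∃ (P : C) (p : ∀ i, P ⟶ A i) (b : P ⟶ B),
      IsWidePullback m P p b ∧ ∀ i, DaggerMonic (p i)

/-- `C` has finite dagger products. -/
def HasFiniteDaggerProducts (C : Type u) [Category.{v} C] [DaggerCategory C] : Prop :=
  ∀ (ι : Type v) [Finite ι] (A : ι → C),
    ∃ (P : C) (p : ∀ i, P ⟶ A i), IsDaggerProduct A P p

/-! A dagger equalizer of `f, g` is a dagger limit of the parallel pair `f, g` with basis its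
source. A dagger intersection of dagger monics `m i : A i ⟶ B` is a dagger limit of the parallel
family consisting of `𝟙 B` and the projections `(m i)† ≫ m i` onto their images, and finite dagger
products are dagger limits of finite discrete diagrams. In the first two cases the leg at the source
is monic, since the other leg factors through it, and a monic partial isometry is dagger monic.

Conversely, for a diagram `D` with finite basis `Ω`, take at each `A ∈ Ω` the joint dagger
equalizer `b A` of all parallel pairs out of `A` (an intersection of dagger equalizers) and a dagger
product `π` of their sources. Since every object `j` lies under exactly one `A ∈ Ω`, the maps
`π A ≫ b A ≫ D.map u` for `u : A ⟶ j` do not depend on `u` and form a limit cone, whose legs at `Ω`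
are the partial isometries `π A ≫ b A` with commuting range projections. -/

open CategoryTheory.Limits DaggerCategory

section DaggerMorphisms

variable {C : Type u} [Category.{v} C] [DaggerCategory C]

lemma DaggerMonic.mono {A B : C} {f : A ⟶ B} (hf : DaggerMonic f) : Mono f :=
  SplitMono.mono ⟨f†, hf⟩

lemma IsPartialIsometry.daggerMonic_of_mono {A B : C} {f : A ⟶ B} (hf : IsPartialIsometry f)
    [Mono f] : DaggerMonic f :=
  (cancel_mono f).1 (by rw [Category.assoc, hf, Category.id_comp])

lemma comp_daggerMonic_comp_dag {X Y Z : C} (x : X ⟶ Y) {e : Y ⟶ Z} (he : DaggerMonic e) :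
    (x ≫ e) ≫ (x ≫ e)† = x ≫ x† := by
  rw [dag_comp, Category.assoc, reassoc_of% he]

lemma IsPartialIsometry.comp_daggerMonic {X Y Z : C} {x : X ⟶ Y} {e : Y ⟶ Z}
    (hx : IsPartialIsometry x) (he : DaggerMonic e) : IsPartialIsometry (x ≫ e) := by
  rw [IsPartialIsometry, ← Category.assoc, comp_daggerMonic_comp_dag x he, Category.assoc,
    reassoc_of% hx]

end DaggerMorphisms

section JointEqualizers

variable {C : Type u} [Category.{v} C]

def IsJointEqualizer {ι : Type*} {E X : C} {T : ι → C} (e : E ⟶ X) (f g : ∀ i, X ⟶ T i) :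
    Prop :=
  (∀ i, e ≫ f i = e ≫ g i) ∧
  ∀ {Y : C} (h : Y ⟶ X), (∀ i, h ≫ f i = h ≫ g i) → ∃! k : Y ⟶ E, k ≫ e = h

lemma IsJointEqualizer.mono {ι : Type*} {E X : C} {T : ι → C} {e : E ⟶ X}
    {f g : ∀ i, X ⟶ T i} (he : IsJointEqualizer e f g) : Mono e where
  right_cancellation x y hxy := by
    obtain ⟨k, -, hk⟩ := he.2 (y ≫ e) fun i => by rw [Category.assoc, he.1 i, Category.assoc]
    exact (hk x hxy).trans (hk y rfl).symm

lemma isEqualizer_of_isJointEqualizer_option {E A B : C} {e : E ⟶ A} {f g : A ⟶ B}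
    (he : IsJointEqualizer e (fun _ : Option PUnit.{v + 1} => f) fun o => o.elim f fun _ => g) :
    IsEqualizer e f g :=
  ⟨he.1 (some PUnit.unit), fun h hh => he.2 h (Option.rec rfl fun _ => hh)⟩

lemma isWidePullback_of_isJointEqualizer_option [DaggerCategory C] {ι : Type v} {P B : C}
    {A : ι → C} {m : ∀ i, A i ⟶ B} (hm : ∀ i, DaggerMonic (m i)) {e : P ⟶ B}
    (he : IsJointEqualizer e (fun _ : Option ι => 𝟙 B)
      fun o => o.elim (𝟙 B) fun i => (m i)† ≫ m i)
    (he_dagger : DaggerMonic e) :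
    IsWidePullback m P (fun i => e ≫ (m i)†) e ∧ ∀ i, DaggerMonic (e ≫ (m i)†) := by
  have he_proj (i : ι) : e ≫ (m i)† ≫ m i = e := by simpa using (he.1 (some i)).symm
  refine ⟨⟨fun i => by rw [Category.assoc, he_proj], fun q c hq => ?_⟩, fun i => ?_⟩
  · have hc_proj (i : ι) : c ≫ (m i)† ≫ m i = c := by
      rw [← hq i, Category.assoc, reassoc_of% hm i]
    obtain ⟨k, hk, hk_uniq⟩ := he.2 c (Option.rec rfl fun i => by simp [hc_proj])
    refine ⟨k, ⟨fun i => ?_, hk⟩, fun k' hk' => hk_uniq k' hk'.2⟩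
    rw [reassoc_of% hk, ← hq i, Category.assoc, hm i, Category.comp_id]
  · rw [DaggerMonic, dag_comp, dag_dag, Category.assoc, reassoc_of% he_proj, he_dagger]

end JointEqualizers

section Basis

variable {J : Type*} [Category J] {Ω : Set J}

lemma isBasis_singleton_zero {T : Type*} [Nonempty T] :
    IsBasis ({.zero} : Set (WalkingParallelFamily T)) := by
  intro B
  refine ⟨.zero, ⟨rfl, ?_⟩, fun A hA => hA.1⟩
  cases B
  · exact ⟨𝟙 _⟩
  · exact ⟨.line (Classical.arbitrary T)⟩

lemma isBasis_univ_discrete {ι : Type*} : IsBasis (Set.univ : Set (Discrete ι)) :=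
  fun B => ⟨B, ⟨trivial, ⟨𝟙 B⟩⟩, fun _ ⟨_, ⟨f⟩⟩ => Discrete.ext (Discrete.eq_of_hom f)⟩

lemma IsBasis.weaklyInitial (hΩ : IsBasis Ω) : WeaklyInitial Ω := fun B =>
  let ⟨A, hA, _⟩ := hΩ B
  ⟨A, hA⟩

lemma IsBasis.exists_eq_comp_map {C : Type u} [Category.{v} C] {D : J ⥤ C} (hΩ : IsBasis Ω)
    {L : C} (c : ∀ A : Ω, L ⟶ D.obj A)
    (hc : ∀ (A : Ω) {j} (u u' : (A : J) ⟶ j), c A ≫ D.map u = c A ≫ D.map u') :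
    ∃ l : ∀ j, L ⟶ D.obj j, ∀ (A : Ω) {j} (u : (A : J) ⟶ j), l j = c A ≫ D.map u := by
  have h_under (j : J) : ∃ A : Ω, Nonempty ((A : J) ⟶ j) :=
    let ⟨A, hA, hu⟩ := hΩ.weaklyInitial j
    ⟨⟨A, hA⟩, hu⟩
  choose β φ using h_under
  refine ⟨fun j => c (β j) ≫ D.map (φ j).some, fun A j u => ?_⟩
  obtain rfl : A = β j := Subtype.ext <| (hΩ j).unique ⟨A.2, ⟨u⟩⟩ ⟨(β j).2, φ j⟩
  exact hc _ _ _

end Basis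

section LimitCones

variable {C : Type u} [Category.{v} C]

lemma IsLimitCone.hom_ext {J : Type u₁} [Category.{v₁} J] {D : J ⥤ C} {L : C}
    {l : ∀ j, L ⟶ D.obj j} (hl : IsLimitCone D L l) {Y : C} {x y : Y ⟶ L}
    (hxy : ∀ j, x ≫ l j = y ≫ l j) : x = y := by
  obtain ⟨k, -, hk⟩ := hl.2 Y (fun j => y ≫ l j) fun f => by rw [Category.assoc, hl.1 f]
  exact (hk x hxy).trans (hk y fun _ => rfl).symm

lemma IsLimitCone.isJointEqualizer_parallelFamily {T : Type*} {X Y : C} {F : T → (X ⟶ Y)}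
    {L : C} {l : ∀ j, L ⟶ (parallelFamily F).obj j} (hl : IsLimitCone (parallelFamily F) L l)
    (t₀ : T) : IsJointEqualizer (l .zero) (fun _ => F t₀) F := by
  have hl_line (t : T) : l .zero ≫ F t = l .one := hl.1 (.line t)
  refine ⟨fun t => by rw [hl_line, hl_line], fun h hh => ?_⟩
  let m : ∀ j, _ ⟶ (parallelFamily F).obj j := fun j => WalkingParallelFamily.casesOn j h (h ≫ F t₀)
  have hm {j j'} (f : j ⟶ j') : m j ≫ (parallelFamily F).map f = m j' := by
    rcases f with _ | t
    · simp
    · exact (hh t).symm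
  obtain ⟨k, hk, -⟩ := hl.2 _ m hm
  refine ⟨k, hk .zero, fun k' hk' => hl.hom_ext fun j => ?_⟩
  cases j
  · rw [hk', hk]
  · rw [hk .one, ← hl.1 (.line t₀), ← Category.assoc, hk']
    rfl

lemma IsDaggerLimit.isDaggerProduct_discrete [DaggerCategory C] {ι : Type*} {A : ι → C}
    {L : C} {l : ∀ j, L ⟶ (Discrete.functor A).obj j}
    (hl : IsDaggerLimit (Discrete.functor A) Set.univ L l) :
    IsDaggerProduct A L fun i => l ⟨i⟩ := by
  obtain ⟨hlim, hpi, hcomm⟩ := hl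
  refine ⟨fun {Y} a => ?_, fun i => hpi ⟨i⟩ trivial, fun i i' => hcomm ⟨i⟩ trivial ⟨i'⟩ trivial⟩
  obtain ⟨k, hk, -⟩ := hlim.2 Y (fun j => a j.as) fun {j j'} f => by
    obtain rfl : j = j' := Discrete.ext (Discrete.eq_of_hom f)
    simp
  exact ⟨k, fun i => hk ⟨i⟩, fun k' hk' => hlim.hom_ext fun j => (hk' j.as).trans (hk j).symm⟩

end LimitCones

namespace FinitelyBasedDaggerComplete

variable {C : Type u} [Category.{v} C] [DaggerCategory C]

lemma exists_daggerMonic_isJointEqualizer (hC : FinitelyBasedDaggerComplete C) {T : Type v}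
    {X Y : C} (F : T → (X ⟶ Y)) (t₀ : T) :
    ∃ (E : C) (e : E ⟶ X), DaggerMonic e ∧ IsJointEqualizer e (fun _ => F t₀) F := by
  have : Nonempty T := ⟨t₀⟩
  obtain ⟨L, l, hlim, hpi, -⟩ := hC _ _ (Set.finite_singleton _) isBasis_singleton_zero
    (parallelFamily F)
  have he := hlim.isJointEqualizer_parallelFamily t₀
  have := he.mono
  exact ⟨L, l .zero, (hpi .zero rfl).daggerMonic_of_mono, he⟩

lemma hasDaggerEqualizers (hC : FinitelyBasedDaggerComplete C) : HasDaggerEqualizers C :=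
  fun f g =>
  let ⟨E, e, he_dagger, he⟩ := hC.exists_daggerMonic_isJointEqualizer
    (fun o : Option PUnit => o.elim f fun _ => g) none
  ⟨E, e, isEqualizer_of_isJointEqualizer_option he, he_dagger⟩

lemma hasDaggerIntersections (hC : FinitelyBasedDaggerComplete C) :
    HasDaggerIntersections C := by
  intro ι B A m hm
  obtain ⟨P, e, he_dagger, he⟩ := hC.exists_daggerMonic_isJointEqualizer
    (fun o : Option ι => o.elim (𝟙 B) fun i => (m i)† ≫ m i) none
  exact ⟨P, _, e, isWidePullback_of_isJointEqualizer_option hm he he_dagger⟩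

lemma hasFiniteDaggerProducts (hC : FinitelyBasedDaggerComplete C) :
    HasFiniteDaggerProducts C := by
  intro ι _ A
  obtain ⟨L, l, hl⟩ := hC (Discrete ι) Set.univ Set.finite_univ isBasis_univ_discrete
    (Discrete.functor A)
  exact ⟨L, _, hl.isDaggerProduct_discrete⟩

end FinitelyBasedDaggerComplete

section LimitsImplyComplete

variable {C : Type u} [Category.{v} C] [DaggerCategory C]

lemma exists_daggerMonic_isJointEqualizer (hE : HasDaggerEqualizers C)
    (hI : HasDaggerIntersections C) {ι : Type v} [Nonempty ι] {X : C} {T : ι → C}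
    (f g : ∀ i, X ⟶ T i) :
    ∃ (P : C) (e : P ⟶ X), DaggerMonic e ∧ IsJointEqualizer e f g := by
  choose E e he he_dagger using fun i => hE (f i) (g i)
  obtain ⟨P, p, b, ⟨hpb, hP⟩, hp_dagger⟩ := hI ι X E e he_dagger
  obtain ⟨i₀⟩ := ‹Nonempty ι›
  refine ⟨P, b, ?_, fun i => by rw [← hpb i, Category.assoc, (he i).1, Category.assoc],
    fun h hh => ?_⟩
  · rw [← hpb i₀, DaggerMonic, comp_daggerMonic_comp_dag _ (he_dagger i₀)]
    exact hp_dagger i₀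
  · choose q hq hq_uniq using fun i => (he i).2 h (hh i)
    obtain ⟨k, ⟨-, hk⟩, hk_uniq⟩ := hP q h hq
    refine ⟨k, hk, fun k' hk' => hk_uniq k' ⟨fun i => hq_uniq i _ ?_, hk'⟩⟩
    dsimp only
    rw [Category.assoc, hpb, hk']

lemma IsDaggerProduct.hom_ext {ι : Type*} {A : ι → C} {P : C} {p : ∀ i, P ⟶ A i}
    (hp : IsDaggerProduct A P p) {Y : C} {x y : Y ⟶ P} (hxy : ∀ i, x ≫ p i = y ≫ p i) :
    x = y := by
  obtain ⟨k, -, hk⟩ := hp.1 fun i => y ≫ p i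
  exact (hk x hxy).trans (hk y fun _ => rfl).symm

lemma IsDaggerProduct.isDaggerLimit {J : Type*} [Category J] {D : J ⥤ C} {Ω : Set J}
    (hΩ : WeaklyInitial Ω) {P : Ω → C} {b : ∀ A, P A ⟶ D.obj A}
    (hb_dagger : ∀ A, DaggerMonic (b A))
    (hb : ∀ A : Ω, IsJointEqualizer (b A)
      (fun s : Σ j, ((A : J) ⟶ j) × ((A : J) ⟶ j) => D.map s.2.1) fun s => D.map s.2.2)
    {L : C} {π : ∀ A, L ⟶ P A} (hπ : IsDaggerProduct P L π) {l : ∀ j, L ⟶ D.obj j}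
    (hl : ∀ (A : Ω) {j} (u : (A : J) ⟶ j), l j = π A ≫ b A ≫ D.map u) :
    IsDaggerLimit D Ω L l := by
  have hl_basis (A : Ω) : l A = π A ≫ b A := by simpa using hl A (𝟙 _)
  refine ⟨⟨fun {j j'} f => ?_, fun M m hm => ?_⟩, fun A hA => ?_, fun A hA A' hA' => ?_⟩
  · obtain ⟨A, hA, ⟨u⟩⟩ := hΩ j
    rw [hl ⟨A, hA⟩ u, hl ⟨A, hA⟩ (u ≫ f)]
    simp
  · choose q hq hq_uniq using fun A : Ω => (hb A).2 (m A) fun s => by rw [hm, hm]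
    obtain ⟨k, hk, -⟩ := hπ.1 q
    refine ⟨k, fun j => ?_, fun k' hk' => hπ.hom_ext fun A => ?_⟩
    · obtain ⟨A, hA, ⟨u⟩⟩ := hΩ j
      rw [hl ⟨A, hA⟩ u, reassoc_of% hk ⟨A, hA⟩, reassoc_of% hq ⟨A, hA⟩, hm]
    · have := (hb_dagger A).mono
      rw [← cancel_mono (b A), Category.assoc, Category.assoc, ← hl_basis, hk', hl_basis,
        reassoc_of% hk, hq]
  · rw [hl_basis ⟨A, hA⟩]
    exact (hπ.2.1 _).comp_daggerMonic (hb_dagger _)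
  · rw [hl_basis ⟨A, hA⟩, hl_basis ⟨A', hA'⟩, comp_daggerMonic_comp_dag _ (hb_dagger _),
      comp_daggerMonic_comp_dag _ (hb_dagger _)]
    exact hπ.2.2 _ _

end LimitsImplyComplete

theorem finitelyBasedDaggerComplete_iff
    (C : Type u) [Category.{v} C] [DaggerCategory C] :
    FinitelyBasedDaggerComplete C ↔
      HasDaggerEqualizers C ∧ HasDaggerIntersections C ∧ HasFiniteDaggerProducts C := by
  refine ⟨fun hC => ⟨hC.hasDaggerEqualizers, hC.hasDaggerIntersections,
    hC.hasFiniteDaggerProducts⟩, fun ⟨hE, hI, hP⟩ J _ Ω hΩ_fin hΩ D => ?_⟩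
  have h_equalizers (A : Ω) : ∃ (P : C) (b : P ⟶ D.obj A), DaggerMonic b ∧ IsJointEqualizer b
      (fun s : Σ j, ((A : J) ⟶ j) × ((A : J) ⟶ j) => D.map s.2.1) fun s => D.map s.2.2 :=
    have : Nonempty (Σ j, ((A : J) ⟶ j) × ((A : J) ⟶ j)) := ⟨⟨A, 𝟙 _, 𝟙 _⟩⟩
    exists_daggerMonic_isJointEqualizer hE hI _ _
  choose P b hb_dagger hb using h_equalizers
  have := hΩ_fin.to_subtype
  obtain ⟨L, π, hπ⟩ := hP Ω P
  obtain ⟨l, hl⟩ := hΩ.exists_eq_comp_map (fun A => π A ≫ b A) fun A j u u' => by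
    simp only [Category.assoc, (hb A).1 ⟨j, u, u'⟩]
  exact ⟨L, l, hπ.isDaggerLimit hΩ.weaklyInitial hb_dagger hb fun A _ u => by
    rw [hl A u, Category.assoc]⟩
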